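/- Let y1, y2 : [0,T] → ℝ be twice continuously differentiable, suppose there exists t* ∈ (0,T) with |y1'(t*) − y2'(t*)| ≥ c1 > 0, and let c2 := sup_{t∈[0,T]}(|y1''| + |y2''|) < ∞. If the interval [t* − c1/(4c2), t* + c1/(4c2)] is contained in (0,T), then there exists a subinterval [l1, l2] of it with l2 − l1 = c1/(8c2) such that inf_{t∈[l1,l2]} |y1(t) − y2(t)| ≥ c1²/(16c2). -/

import Mathlib

/-!
Put `g = y1 - y2` and `δ = c1 / (4 c2)`, replacing `g` by `-g` so that `g'(t*) ≥ c1`. Since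
`|g''| ≤ c2`, the slope of `g` stays at least `c1 - c2 δ = 3 c1 / 4` on `[t* - δ, t* + δ]`, so `g`
increases at that rate there. If `g(t*) ≥ 0` then `g ≥ (3 c1 / 4)(δ / 2) ≥ c1² / (16 c2)` on the
right quarter `[t* + δ/2, t* + δ]`; otherwise `-g` is that large on the left quarter.
-/

open Set

lemma sub_mul_le_of_abs_deriv_le {f : ℝ → ℝ} {a δ C : ℝ} (hf : Differentiable ℝ f)
    (hC : ∀ x ∈ Icc (a - δ) (a + δ), |deriv f x| ≤ C) {t : ℝ} (ht : t ∈ Icc (a - δ) (a + δ)) :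
    f a - C * δ ≤ f t := by
  have ha : a ∈ Icc (a - δ) (a + δ) := ⟨by linarith [ht.1, ht.2], by linarith [ht.1, ht.2]⟩
  have hC0 : 0 ≤ C := (abs_nonneg _).trans (hC a ha)
  have hlip : |f t - f a| ≤ C * |t - a| :=
    Convex.norm_image_sub_le_of_norm_deriv_le (fun x _ => hf x) hC (convex_Icc _ _) ha ht
  have hdist : |t - a| ≤ δ := abs_sub_le_iff.mpr ⟨by linarith [ht.2], by linarith [ht.1]⟩
  linarith [neg_abs_le (f t - f a), mul_le_mul_of_nonneg_left hdist hC0]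

lemma exists_Icc_half_le_abs_of_le_deriv {g : ℝ → ℝ} {a δ m : ℝ} (hg : Differentiable ℝ g)
    (hδ : 0 ≤ δ) (hm : 0 ≤ m) (hslope : ∀ x ∈ Icc (a - δ) (a + δ), m ≤ deriv g x) :
    ∃ l1 l2 : ℝ, Icc l1 l2 ⊆ Icc (a - δ) (a + δ) ∧ l2 - l1 = δ / 2 ∧
      ∀ t ∈ Icc l1 l2, m * (δ / 2) ≤ |g t| := by
  have hgrowth : ∀ s ∈ Icc (a - δ) (a + δ), ∀ t ∈ Icc (a - δ) (a + δ), s ≤ t →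
      m * (t - s) ≤ g t - g s :=
    (convex_Icc _ _).mul_sub_le_image_sub_of_le_deriv hg.continuous.continuousOn
      hg.differentiableOn fun x hx => hslope x (interior_subset hx)
  have ha : a ∈ Icc (a - δ) (a + δ) := ⟨by linarith, by linarith⟩
  rcases le_or_gt 0 (g a) with hpos | hneg
  · refine ⟨a + δ / 2, a + δ, Icc_subset_Icc (by linarith) le_rfl, by ring, fun t ht => ?_⟩
    have hgt := hgrowth a ha t ⟨by linarith [ht.1], ht.2⟩ (by linarith [ht.1])
    have hfar : m * (δ / 2) ≤ m * (t - a) := mul_le_mul_of_nonneg_left (by linarith [ht.1]) hm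
    linarith [le_abs_self (g t)]
  · refine ⟨a - δ, a - δ / 2, Icc_subset_Icc le_rfl (by linarith), by ring, fun t ht => ?_⟩
    have hgt := hgrowth t ⟨ht.1, by linarith [ht.2]⟩ a ha (by linarith [ht.2])
    have hfar : m * (δ / 2) ≤ m * (a - t) := mul_le_mul_of_nonneg_left (by linarith [ht.2]) hm
    linarith [neg_abs_le (g t)]

lemma exists_Icc_le_abs_of_le_deriv {g : ℝ → ℝ} {a c1 c2 : ℝ} (hg : ContDiff ℝ 2 g)
    (hc1 : 0 < c1) (hc2 : 0 ≤ c2) (hd : c1 ≤ deriv g a)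
    (hbound : ∀ t ∈ Icc (a - c1 / (4 * c2)) (a + c1 / (4 * c2)), |deriv (deriv g) t| ≤ c2) :
    ∃ l1 l2 : ℝ, Icc l1 l2 ⊆ Icc (a - c1 / (4 * c2)) (a + c1 / (4 * c2)) ∧
      l2 - l1 = c1 / (8 * c2) ∧ ∀ t ∈ Icc l1 l2, c1 ^ 2 / (16 * c2) ≤ |g t| := by
  set δ := c1 / (4 * c2)
  have hδ : 0 ≤ δ := by positivity
  -- If `c2 = 0`, division by zero makes `δ`, `c2 * δ` and both sides of the first inequality `0`.
  have hnum : c1 ^ 2 / (16 * c2) ≤ (c1 - c2 * δ) * (δ / 2) ∧ c2 * δ ≤ c1 / 4 := by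
    rcases hc2.eq_or_lt with rfl | hc2
    · simp only [δ, mul_zero, div_zero, sub_zero, zero_div, le_refl, true_and]
      positivity
    · have hc2δ : c2 * δ = c1 / 4 := by simp only [δ]; field_simp
      refine ⟨?_, hc2δ.le⟩
      rw [hc2δ, div_le_iff₀ (by positivity)]
      field_simp [δ]
      nlinarith
  have hslope : ∀ x ∈ Icc (a - δ) (a + δ), c1 - c2 * δ ≤ deriv g x := fun x hx => by
    linarith [sub_mul_le_of_abs_deriv_le hg.differentiable_deriv_two hbound hx]
  obtain ⟨l1, l2, hsub, hlen, hlow⟩ := exists_Icc_half_le_abs_of_le_deriv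
    (hg.differentiable (by norm_num)) hδ (by linarith [hnum.2]) hslope
  exact ⟨l1, l2, hsub, by rw [hlen]; ring, fun t ht => hnum.1.trans (hlow t ht)⟩

lemma exists_Icc_le_abs_of_le_abs_deriv {g : ℝ → ℝ} {a c1 c2 : ℝ} (hg : ContDiff ℝ 2 g)
    (hc1 : 0 < c1) (hc2 : 0 ≤ c2) (hd : c1 ≤ |deriv g a|)
    (hbound : ∀ t ∈ Icc (a - c1 / (4 * c2)) (a + c1 / (4 * c2)), |deriv (deriv g) t| ≤ c2) :
    ∃ l1 l2 : ℝ, Icc l1 l2 ⊆ Icc (a - c1 / (4 * c2)) (a + c1 / (4 * c2)) ∧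
      l2 - l1 = c1 / (8 * c2) ∧ ∀ t ∈ Icc l1 l2, c1 ^ 2 / (16 * c2) ≤ |g t| := by
  rcases le_total 0 (deriv g a) with hpos | hneg
  · exact exists_Icc_le_abs_of_le_deriv hg hc1 hc2 (by rwa [abs_of_nonneg hpos] at hd) hbound
  · have hneg_deriv : deriv (-g) = -deriv g := deriv.neg'
    obtain ⟨l1, l2, hsub, hlen, hlow⟩ := exists_Icc_le_abs_of_le_deriv (g := -g) hg.neg hc1 hc2
      (by rwa [hneg_deriv, Pi.neg_apply, ← abs_of_nonpos hneg])
      (by simpa only [hneg_deriv, deriv.neg', abs_neg] using hbound)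
    exact ⟨l1, l2, hsub, hlen, fun t ht => by simpa only [Pi.neg_apply, abs_neg] using hlow t ht⟩

theorem stmt_1 (T c1 c2 : ℝ) (y1 y2 : ℝ → ℝ) (tstar : ℝ)
    (hy1 : ContDiff ℝ 2 y1) (hy2 : ContDiff ℝ 2 y2)
    (htstar : tstar ∈ Set.Ioo (0:ℝ) T)
    (hc1 : 0 < c1)
    (hgap : c1 ≤ |deriv y1 tstar - deriv y2 tstar|)
    (hc2 : ∀ t ∈ Set.Icc (0:ℝ) T, |deriv (deriv y1) t| + |deriv (deriv y2) t| ≤ c2)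
    (hsub : Set.Icc (tstar - c1/(4*c2)) (tstar + c1/(4*c2)) ⊆ Set.Ioo (0:ℝ) T) :
    ∃ l1 l2 : ℝ,
      Set.Icc l1 l2 ⊆ Set.Icc (tstar - c1/(4*c2)) (tstar + c1/(4*c2)) ∧
      l2 - l1 = c1/(8*c2) ∧
      ∀ t ∈ Set.Icc l1 l2, c1^2/(16*c2) ≤ |y1 t - y2 t| := by
  have hd1 : Differentiable ℝ y1 := hy1.differentiable (by norm_num)
  have hd2 : Differentiable ℝ y2 := hy2.differentiable (by norm_num)
  have hderiv : deriv (y1 - y2) = deriv y1 - deriv y2 :=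
    funext fun t => deriv_sub (hd1 t) (hd2 t)
  have hderiv2 : deriv (deriv (y1 - y2)) = deriv (deriv y1) - deriv (deriv y2) := by
    rw [hderiv]
    exact funext fun t =>
      deriv_sub (hy1.differentiable_deriv_two t) (hy2.differentiable_deriv_two t)
  have hc2nn : 0 ≤ c2 :=
    (add_nonneg (abs_nonneg _) (abs_nonneg _)).trans (hc2 tstar (Ioo_subset_Icc_self htstar))
  have hbound : ∀ t ∈ Icc (tstar - c1 / (4 * c2)) (tstar + c1 / (4 * c2)),
      |deriv (deriv (y1 - y2)) t| ≤ c2 := fun t ht => by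
    rw [hderiv2]
    exact (abs_sub _ _).trans (hc2 t (Ioo_subset_Icc_self (hsub ht)))
  exact exists_Icc_le_abs_of_le_abs_deriv (g := y1 - y2) (hy1.sub hy2) hc1 hc2nn
    (by rwa [hderiv, Pi.sub_apply]) hbound
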